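/- arXiv:1812.11712 — 8 statements merged into one kernel-verified Lean document; each statement's English description precedes it below -/
import Mathlib

section
/- For every positive integer n, every probability vector p = (p_0,…,p_{n-1}), every Boolean function f : {-1,1}^n → {-1,1}, and every i ∈ {1,…,n}, the i-th semivalue satisfies the reformulation: \tilde f^p(i) = (1/2)·Σ_{x ∈ {-1,1}^n} f(x)·x_i·(p_{wt(x)} + p_{wt(x)-1}) + (1/2)·Σ_{x ∈ {-1,1}^n} f(x)·(p_{wt(x)-1} − p_{wt(x)}). -/
open Finset

noncomputable section

/-- `sgn z` is `1` if `z ≥ 0` and `-1` otherwise. -/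
def sgn (z : ℝ) : ℝ := if 0 ≤ z then 1 else -1

/-- The ±1 real value encoded by a Boolean coordinate (`true ↦ 1`, `false ↦ -1`). -/
def chi (b : Bool) : ℝ := if b then 1 else -1

/-- `wt x` is the number of coordinates of `x ∈ {-1,1}^n` equal to `1`. -/
def wt {n : ℕ} (x : Fin n → Bool) : ℤ :=
  ((Finset.univ.filter fun i => x i = true).card : ℤ)

/-- Inner product `w · x` of a real vector `w` with a ±1 vector `x`. -/
def dotp {n : ℕ} (w : Fin n → ℝ) (x : Fin n → Bool) : ℝ :=
  ∑ i, w i * chi (x i)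

/-- The `i`-th semivalue of `f : {-1,1}^n → {-1,1}` with respect to the
probability vector `p` (indexed by `ℤ`, with `p t = 0` out of range):
`∑_{x : x_i = -1} p_{wt x} f(x) x_i + ∑_{x : x_i = 1} p_{wt x - 1} f(x) x_i`. -/
def semivalue {n : ℕ} (p : ℤ → ℝ) (f : (Fin n → Bool) → ℝ) (i : Fin n) : ℝ :=
  ∑ x : Fin n → Bool, (if x i then p (wt x - 1) else p (wt x)) * f x * chi (x i)

/-- `μ'_p(x) = p_{wt x} + p_{wt x - 1}`. -/
def mu' {n : ℕ} (p : ℤ → ℝ) (x : Fin n → Bool) : ℝ := p (wt x) + p (wt x - 1)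

/-- The normalizing factor `Λ(p) = ∑_x μ'_p(x)`. -/
def lam (n : ℕ) (p : ℤ → ℝ) : ℝ := ∑ x : Fin n → Bool, mu' p x

/-- The probability distribution `μ_p(x) = μ'_p(x)/Λ(p)`. -/
def mu {n : ℕ} (p : ℤ → ℝ) (x : Fin n → Bool) : ℝ := mu' p x / lam n p

lemma ite_mul_chi_eq (b : Bool) (a c v : ℝ) :
    (if b then a else c) * v * chi b
      = (1 / 2) * (v * chi b * (c + a)) + (1 / 2) * (v * (a - c)) := by
  cases b <;> simp only [chi, Bool.false_eq_true, if_true, if_false] <;> ring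

theorem stmt0_general (n : ℕ) (p : ℤ → ℝ)
    (f : (Fin n → Bool) → ℝ)
    (i : Fin n) :
    semivalue p f i
      = (1 / 2) * ∑ x : Fin n → Bool, f x * chi (x i) * (p (wt x) + p (wt x - 1))
        + (1 / 2) * ∑ x : Fin n → Bool, f x * (p (wt x - 1) - p (wt x)) := by
  rw [semivalue, mul_sum, mul_sum, ← sum_add_distrib]
  exact sum_congr rfl fun x _ => ite_mul_chi_eq (x i) _ _ _

theorem stmt0 (n : ℕ) (hn : 0 < n) (p : ℤ → ℝ)
    (hp_nonneg : ∀ t : ℤ, 0 ≤ p t)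
    (hp_out : ∀ t : ℤ, (t < 0 ∨ (n : ℤ) ≤ t) → p t = 0)
    (hp_sum : ∑ t ∈ Finset.range n, ((n - 1).choose t : ℝ) * p (t : ℤ) = 1)
    (f : (Fin n → Bool) → ℝ) (hf : ∀ x, f x = 1 ∨ f x = -1)
    (i : Fin n) :
    semivalue p f i
      = (1 / 2) * ∑ x : Fin n → Bool, f x * chi (x i) * (p (wt x) + p (wt x - 1))
        + (1 / 2) * ∑ x : Fin n → Bool, f x * (p (wt x - 1) - p (wt x)) :=
  stmt0_general n p f i
end
end

section
/- Let n ≥ 1, let c_1,…,c_n be positive integers with C = Σ_{i=1}^n c_i even, and let w = (c_1,…,c_n, −C/2, −C/2) ∈ ℚ^{n+2}. Then: (a) w·x = 0 for x = (1,…,1) and x = (−1,…,−1); (b) every x ∈ {-1,1}^{n+2} with w·x = 0 other than (1,…,1) and (−1,…,−1) satisfies x_{n+1} ≠ x_{n+2} and Σ_{i ≤ n : x_i = 1} c_i = C/2; and (c) the number of x ∈ {-1,1}^{n+2} \ {(1,…,1), (−1,…,−1)} with w·x = 0 equals 2·|{S ⊆ {1,…,n} : Σ_{i ∈ S} c_i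 = C/2}|. -/
open Finset

noncomputable section

/-! Since the weights sum to zero, `w · x = 2 ∑_{x_i = 1} w_i`, so `x` is a zero exactly when
the `c`-weight of `S = {i ≤ n : x_i = 1}` equals `m` times the number of `1`s among the last two
coordinates. As the `c_i` are positive, that number can only be `0` or `2` when `x` is constant;
the nontrivial zeros are therefore the vectors `(S, b, ¬b)` with `c(S) = m`, two for each `S`. -/

theorem dotp_eq_two_mul_sum_filter_sub {n : ℕ} (w : Fin n → ℝ) (x : Fin n → Bool) :
    dotp w x = 2 * ∑ i ∈ univ.filter (fun i => x i = true), w i - ∑ i, w i := by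
  rw [dotp, sum_filter, mul_sum, ← sum_sub_distrib]
  refine sum_congr rfl fun i _ => ?_
  cases x i <;> simp [chi, two_mul]

theorem dotp_const {n : ℕ} (w : Fin n → ℝ) (b : Bool) :
    dotp w (fun _ => b) = chi b * ∑ i, w i := by
  simp only [dotp, mul_sum, mul_comm]

theorem dotp_eq_zero_iff_sum_filter_eq_zero {n : ℕ} {w : Fin n → ℝ} (hw : ∑ i, w i = 0)
    (x : Fin n → Bool) :
    dotp w x = 0 ↔ ∑ i ∈ univ.filter (fun i => x i = true), w i = 0 := by
  rw [dotp_eq_two_mul_sum_filter_sub, hw]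
  constructor <;> intro h <;> linarith

theorem Fin.append_inj {α : Type*} {m n : ℕ} {y y' : Fin m → α} {z z' : Fin n → α} :
    Fin.append y z = Fin.append y' z' ↔ y = y' ∧ z = z' :=
  (Fin.appendEquiv m n).injective.eq_iff (a := (y, z)) (b := (y', z')) |>.trans Prod.ext_iff

theorem Fin.append_eq_const_iff {α : Type*} {m n : ℕ} (y : Fin m → α) (z : Fin n → α) (a : α) :
    Fin.append y z = (fun _ => a) ↔ y = (fun _ => a) ∧ z = (fun _ => a) := by
  rw [← Fin.append_castAdd_natAdd (f := fun _ => a), Fin.append_inj]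

theorem Fin.sum_filter_append {M : Type*} [AddCommMonoid M] {m n : ℕ} (u : Fin m → M)
    (v : Fin n → M) (y : Fin m → Bool) (z : Fin n → Bool) :
    ∑ i ∈ univ.filter (fun i => Fin.append y z i = true), Fin.append u v i =
      ∑ i ∈ univ.filter (fun i => y i = true), u i +
        ∑ i ∈ univ.filter (fun i => z i = true), v i := by
  simp only [sum_filter, Fin.sum_univ_add, Fin.append_left, Fin.append_right]

section PositiveWeights

variable {ι M : Type*} [Fintype ι] [AddCommGroup M] [PartialOrder M] [IsOrderedAddMonoid M]
  {c : ι → M}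

theorem sum_filter_eq_zero_iff_of_pos (hc : ∀ i, 0 < c i) (y : ι → Bool) :
    ∑ i ∈ univ.filter (fun i => y i = true), c i = 0 ↔ y = fun _ => false := by
  rw [sum_eq_zero_iff_of_nonneg fun i _ => (hc i).le]
  simp [funext_iff, (hc _).ne']

theorem sum_filter_eq_sum_iff_of_pos (hc : ∀ i, 0 < c i) (y : ι → Bool) :
    ∑ i ∈ univ.filter (fun i => y i = true), c i = ∑ i, c i ↔ y = fun _ => true := by
  rw [← sum_filter_add_sum_filter_not univ (fun i => y i = true), left_eq_add]
  simpa [funext_iff] using sum_filter_eq_zero_iff_of_pos hc (fun i => !y i)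

end PositiveWeights

def nontrivialZeros {k : ℕ} (w : Fin k → ℝ) : Set (Fin k → Bool) :=
  {x | dotp w x = 0 ∧ x ≠ (fun _ => true) ∧ x ≠ (fun _ => false)}

def balancedWeights {n : ℕ} (c : Fin n → ℤ) (m : ℤ) : Fin (n + 2) → ℝ :=
  Fin.append (fun i => (c i : ℝ)) fun _ => -(m : ℝ)

section BalancedWeights

variable {n : ℕ} {c : Fin n → ℤ} {m : ℤ}

theorem sum_balancedWeights (hm : ∑ i, c i = 2 * m) : ∑ i, balancedWeights c m i = 0 := by
  have hm' : (∑ i, c i : ℝ) = 2 * m := by exact_mod_cast hm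
  simp [balancedWeights, Fin.sum_univ_add, hm']

theorem dotp_balancedWeights_append_eq_zero_iff (hm : ∑ i, c i = 2 * m)
    (y : Fin n → Bool) (z : Fin 2 → Bool) :
    dotp (balancedWeights c m) (Fin.append y z) = 0 ↔
      ∑ i ∈ univ.filter (fun i => y i = true), c i
        = (if z 0 then m else 0) + (if z 1 then m else 0) := by
  rw [dotp_eq_zero_iff_sum_filter_eq_zero (sum_balancedWeights hm), balancedWeights,
    Fin.sum_filter_append, sum_filter (s := univ) (p := fun i => z i = true), Fin.sum_univ_two,
    ← @Int.cast_inj ℝ]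
  push_cast
  split_ifs <;> constructor <;> intro h <;> linarith

theorem mem_nontrivialZeros_balancedWeights_iff (hc : ∀ i, 0 < c i) (hm : ∑ i, c i = 2 * m)
    (x : Fin (n + 2) → Bool) :
    x ∈ nontrivialZeros (balancedWeights c m) ↔
      x (Fin.natAdd n 0) ≠ x (Fin.natAdd n 1) ∧
        ∑ i ∈ univ.filter (fun i => x (Fin.castAdd 2 i) = true), c i = m := by
  obtain ⟨y, z, rfl⟩ : ∃ y z, x = Fin.append y z := ⟨_, _, Fin.append_castAdd_natAdd.symm⟩
  rw [nontrivialZeros, Set.mem_ofPred_eq, dotp_balancedWeights_append_eq_zero_iff hm, Ne, Ne,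
    Fin.append_eq_const_iff, Fin.append_eq_const_iff, funext_iff (f := z), funext_iff (f := z),
    Fin.forall_fin_two, Fin.forall_fin_two, ← sum_filter_eq_sum_iff_of_pos hc, hm,
    ← sum_filter_eq_zero_iff_of_pos hc]
  simp only [Fin.append_left, Fin.append_right]
  cases z 0 <;> cases z 1 <;> simp
  omega

theorem ncard_nontrivialZeros_balancedWeights (hc : ∀ i, 0 < c i) (hm : ∑ i, c i = 2 * m) :
    (nontrivialZeros (balancedWeights c m)).ncard
      = 2 * {S : Finset (Fin n) | ∑ i ∈ S, c i = m}.ncard := by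
  set Φ : Finset (Fin n) × Bool → Fin (n + 2) → Bool :=
    fun p => Fin.append (fun i => decide (i ∈ p.1)) ![p.2, !p.2]
  have hΦ : Φ.Injective := by
    rintro ⟨S, b⟩ ⟨S', b'⟩ h
    obtain ⟨hS, hb⟩ := Fin.append_inj.1 h
    exact Prod.ext (Finset.ext fun i => by simpa using congrFun hS i) (by simpa using congrFun hb 0)
  have himage : nontrivialZeros (balancedWeights c m) =
      Φ '' ({S | ∑ i ∈ S, c i = m} ×ˢ Set.univ) := by
    ext x
    simp only [mem_nontrivialZeros_balancedWeights_iff hc hm, Set.mem_image, Set.mem_prod,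
      Prod.exists]
    constructor
    · rintro ⟨hne, hsum⟩
      refine ⟨_, x (Fin.natAdd n 0), ⟨hsum, trivial⟩, ?_⟩
      conv_rhs => rw [← Fin.append_castAdd_natAdd (f := x)]
      refine Fin.append_inj.2 ⟨by simp, funext fun i => ?_⟩
      fin_cases i <;> cases h0 : x (Fin.natAdd n 0) <;> simp_all
    · rintro ⟨S, b, ⟨hS, -⟩, rfl⟩
      simpa [Φ] using hS
  rw [himage, Set.ncard_image_of_injective _ hΦ, Set.ncard_prod, Set.ncard_univ,
    Nat.card_eq_fintype_card, Fintype.card_bool, mul_comm]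

end BalancedWeights

theorem stmt2 (n : ℕ) (c : Fin n → ℤ) (hc : ∀ i, 0 < c i)
    (m : ℤ) (hm : ∑ i, c i = 2 * m)
    (w : Fin (n + 2) → ℝ)
    (hw : ∀ i : Fin (n + 2), w i = if h : (i : ℕ) < n then (c ⟨i, h⟩ : ℝ) else -(m : ℝ)) :
    (dotp w (fun _ => true) = 0 ∧ dotp w (fun _ => false) = 0) ∧
    (∀ x : Fin (n + 2) → Bool,
        dotp w x = 0 → x ≠ (fun _ => true) → x ≠ (fun _ => false) →
        x ⟨n, by omega⟩ ≠ x ⟨n + 1, by omega⟩ ∧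
        ∑ i ∈ Finset.univ.filter (fun i : Fin n => x (Fin.castAdd 2 i) = true), c i = m) ∧
    {x : Fin (n + 2) → Bool |
        dotp w x = 0 ∧ x ≠ (fun _ => true) ∧ x ≠ (fun _ => false)}.ncard
      = 2 * {S : Finset (Fin n) | ∑ i ∈ S, c i = m}.ncard := by
  obtain rfl : w = balancedWeights c m := funext fun i => by
    refine Fin.addCases (fun j => ?_) (fun j => ?_) i <;> simp [hw, balancedWeights]
  have hsum := sum_balancedWeights hm
  exact ⟨⟨by simp [dotp_const, hsum], by simp [dotp_const, hsum]⟩,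
    fun x hx ht hf => (mem_nontrivialZeros_balancedWeights_iff hc hm x).1 ⟨hx, ht, hf⟩,
    ncard_nontrivialZeros_balancedWeights hc hm⟩
end
end

section
/- Let n ≥ 1, let c_1,…,c_n be positive integers with C = Σ_{i=1}^n c_i even, and suppose k ∈ {1,…,n−1} is such that every subset S ⊆ {1,…,n} with Σ_{i ∈ S} c_i = C/2 has |S| = k or |S| = n−k. Let w = (c_1,…,c_n, −C/2, −C/2), let p = (p_0,…,p_{n+1}) be a probability vector on {-1,1}^{n+2}, and let N = |{S ⊆ {1,…,n} : Σ_{i ∈ S} c_i = C/2}|. Then Pr_{x ∼ μ_p}[w·x = 0] = ( N·(p_k + p_{k+1} + p_{n−k} + p_{n−k+1}) + p_0 + p_{n+1} ) / Λ(p). Equivalently, N = ( Λ(p)·Pr_{x ∼ μ_p}[w·x = 0] − (p_0 + p_{n+1}) ) / (p_k + p_{k+1} + p_{n−k} + p_{n−k+1}), provided p_k + p_{k+1} + p_{n−k} + p_{n−k+1} > 0. -/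
open Finset

noncomputable section

open scoped Classical

/-!
Split `x ∈ {-1,1}^{n+2}` as `(S, a, b)`, where `S ⊆ {1,…,n}` is the set of coordinates equal to
`1` among the first `n`. Then `w · x = 2 (c(S) - m ([a] + [b]))` and `wt x = |S| + [a] + [b]`, so
the zeros of `w · x` are `(∅, -1, -1)`, `({1,…,n}, 1, 1)` and `(S, 1, -1)`, `(S, -1, 1)` for the
halving sets `S` (those with `c(S) = m`). Halving sets are closed under complement, which exchanges
`|S| = k` with `|S| = n - k`, so summing `μ'_p` over the zeros gives `N` times the symmetric
combination `p_k + p_{k+1} + p_{n-k} + p_{n-k+1}`, plus `p_0 + p_{n+1}`.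
-/

section BooleanCube

variable {n : ℕ}

lemma chi_eq (b : Bool) : chi b = 2 * (b.toNat : ℝ) - 1 := by
  cases b <;> norm_num [chi]

lemma wt_snoc (y : Fin n → Bool) (b : Bool) :
    wt (Fin.snoc y b : Fin (n + 1) → Bool) = wt y + b.toNat := by
  simp only [wt, card_filter, Nat.cast_sum, Fin.sum_univ_castSucc, Fin.snoc_castSucc, Fin.snoc_last]
  cases b <;> simp

lemma dotp_snoc (v : Fin (n + 1) → ℝ) (y : Fin n → Bool) (b : Bool) :
    dotp v (Fin.snoc y b) = dotp (fun i => v i.castSucc) y + v (Fin.last n) * chi b := by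
  simp [dotp, Fin.sum_univ_castSucc]

lemma wt_indicator (S : Finset (Fin n)) : wt (fun i => decide (i ∈ S)) = #S := by
  simp [wt]

lemma dotp_indicator (v : Fin n → ℝ) (S : Finset (Fin n)) :
    dotp v (fun i => decide (i ∈ S)) = 2 * ∑ i ∈ S, v i - ∑ i, v i := by
  have hterm (i : Fin n) :
      v i * chi (decide (i ∈ S)) = 2 * (if i ∈ S then v i else 0) - v i := by
    by_cases h : i ∈ S
    · simp [chi, h]; ring
    · simp [chi, h]
  simp only [dotp, hterm, sum_sub_distrib, ← mul_sum, sum_ite_mem, univ_inter]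

lemma sum_fun_bool_eq_sum_finset {M : Type*} [AddCommMonoid M] (F : (Fin n → Bool) → M) :
    ∑ y, F y = ∑ S : Finset (Fin n), F (fun i => decide (i ∈ S)) := by
  refine (Fintype.sum_bijective (fun S : Finset (Fin n) => fun i => decide (i ∈ S))
    ⟨fun S T h => ?_, fun y => ⟨({i | y i} : Finset _), ?_⟩⟩ _ _ fun _ => rfl).symm
  · ext i; simpa using congrFun h i
  · ext i; simp

lemma sum_fun_bool_snoc {M : Type*} [AddCommMonoid M] (F : (Fin (n + 1) → Bool) → M) :
    ∑ x, F x = ∑ y : Fin n → Bool, ∑ b, F (Fin.snoc y b) := by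
  rw [← (Fin.snocEquiv fun _ => Bool).sum_comp, Fintype.sum_prod_type, Finset.sum_comm]
  rfl

end BooleanCube

section Subsets

variable {ι : Type*} {c : ι → ℤ}

lemma sum_eq_zero_iff_eq_empty_of_pos (hc : ∀ i, 0 < c i) {S : Finset ι} :
    ∑ i ∈ S, c i = 0 ↔ S = ∅ := by
  rw [sum_eq_zero_iff_of_nonneg fun i _ => (hc i).le, ← not_nonempty_iff_eq_empty]
  exact ⟨fun h ⟨i, hi⟩ => (hc i).ne' (h i hi), fun h i hi => absurd ⟨i, hi⟩ h⟩

variable [Fintype ι] [DecidableEq ι]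

lemma sum_eq_sum_univ_iff_eq_univ_of_pos (hc : ∀ i, 0 < c i) {S : Finset ι} :
    ∑ i ∈ S, c i = ∑ i, c i ↔ S = univ := by
  rw [← sum_add_sum_compl S c, left_eq_add, sum_eq_zero_iff_eq_empty_of_pos hc,
    compl_eq_empty_iff]

lemma sum_card_eq_sum_card_compl {R : Type*} [AddCommMonoid R] {A : Finset (Finset ι)}
    (hA : ∀ S ∈ A, Sᶜ ∈ A) (g : ℤ → R) :
    ∑ S ∈ A, g #S = ∑ S ∈ A, g (Fintype.card ι - #S) := by
  refine sum_nbij' compl compl hA hA (fun S _ => compl_compl S) (fun S _ => compl_compl S)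
    fun S _ => ?_
  rw [card_compl, Nat.cast_sub (card_le_univ S), sub_sub_cancel]

lemma sum_compl_eq_of_sum_eq_half {m : ℤ} (hm : ∑ i, c i = 2 * m) {S : Finset ι}
    (hS : ∑ i ∈ S, c i = m) :
    ∑ i ∈ Sᶜ, c i = m := by
  have := sum_add_sum_compl S c
  omega

lemma two_mul_sum_filter_sum_eq_half {R : Type*} [CommRing R] {m : ℤ} (hm : ∑ i, c i = 2 * m)
    {k : ℕ} (hk : k ≤ Fintype.card ι)
    (hsize : ∀ S : Finset ι, ∑ i ∈ S, c i = m → #S = k ∨ #S = Fintype.card ι - k)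
    (g : ℤ → R) :
    2 * ∑ S ∈ univ.filter (fun S : Finset ι => ∑ i ∈ S, c i = m), g #S
      = #(univ.filter fun S : Finset ι => ∑ i ∈ S, c i = m)
          * (g k + g (Fintype.card ι - k)) := by
  set A := univ.filter fun S : Finset ι => ∑ i ∈ S, c i = m
  have hA : ∀ S ∈ A, Sᶜ ∈ A := by
    simp only [A, mem_filter, mem_univ, true_and]
    exact fun S => sum_compl_eq_of_sum_eq_half hm
  have hconst : ∀ S ∈ A, g #S + g (Fintype.card ι - #S) = g k + g (Fintype.card ι - k) := by
    intro S hS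
    rcases hsize S (mem_filter.mp hS).2 with h | h
    · rw [h]
    · rw [h, Nat.cast_sub hk, sub_sub_cancel, add_comm]
  rw [two_mul]
  nth_rw 2 [sum_card_eq_sum_card_compl hA g]
  rw [← sum_add_distrib, sum_congr rfl hconst, sum_const, nsmul_eq_mul]

end Subsets

section Distribution

variable {n : ℕ} {p : ℤ → ℝ}

lemma sum_ite_mu (P : (Fin n → Bool) → Prop) [DecidablePred P] :
    ∑ x, (if P x then mu p x else 0) = (∑ x, if P x then mu' p x else 0) / lam n p := by
  rw [sum_div]
  exact sum_congr rfl fun x _ => by split_ifs <;> simp [mu]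

lemma lam_mul_sum_ite_mu (hp : ∀ t, 0 ≤ p t) (P : (Fin n → Bool) → Prop) [DecidablePred P] :
    lam n p * ∑ x, (if P x then mu p x else 0) = ∑ x, if P x then mu' p x else 0 := by
  rw [sum_ite_mu]
  rcases eq_or_ne (lam n p) 0 with h | h
  · have hmu' : ∀ x, mu' p x = 0 :=
      fun x => (sum_eq_zero_iff_of_nonneg fun y _ => add_nonneg (hp _) (hp _)).mp h x (mem_univ x)
    simp [h, hmu']
  · exact mul_div_cancel₀ _ h

end Distribution

section HalvingWeights

variable {n : ℕ} {c : Fin n → ℤ} {m : ℤ} {w : Fin (n + 2) → ℝ}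

lemma dotp_eq_zero_iff (hm : ∑ i, c i = 2 * m)
    (hw : ∀ i : Fin (n + 2), w i = if h : (i : ℕ) < n then (c ⟨i, h⟩ : ℝ) else -(m : ℝ))
    (S : Finset (Fin n)) (a b : Bool) :
    dotp w (Fin.snoc (Fin.snoc (fun i => decide (i ∈ S)) a) b) = 0
      ↔ ∑ i ∈ S, c i = m * (a.toNat + b.toNat) := by
  have hc : (fun i : Fin n => w i.castSucc.castSucc) = fun i => (c i : ℝ) := by
    funext i
    simp [hw]
  have hlast : w (Fin.last n).castSucc = -m ∧ w (Fin.last (n + 1)) = -m := by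
    simp [hw]
  have hm' : ∑ i, (c i : ℝ) = 2 * m := by exact_mod_cast hm
  rw [dotp_snoc, dotp_snoc, hc, dotp_indicator, hm', hlast.1, hlast.2, chi_eq, chi_eq]
  rw [← @Int.cast_inj ℝ]
  push_cast
  constructor <;> intro h <;> linarith

lemma sum_ite_mu'_dotp_eq_zero (hc : ∀ i, 0 < c i) (hm : ∑ i, c i = 2 * m) {k : ℕ}
    (hk : k ≤ n)
    (hsize : ∀ S : Finset (Fin n), ∑ i ∈ S, c i = m → #S = k ∨ #S = n - k)
    (hw : ∀ i : Fin (n + 2), w i = if h : (i : ℕ) < n then (c ⟨i, h⟩ : ℝ) else -(m : ℝ))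
    {p : ℤ → ℝ} (hp_out : ∀ t : ℤ, (t < 0 ∨ (n : ℤ) + 2 ≤ t) → p t = 0) :
    ∑ x : Fin (n + 2) → Bool, (if dotp w x = 0 then mu' p x else 0)
      = #(univ.filter fun S : Finset (Fin n) => ∑ i ∈ S, c i = m)
          * (p k + p (k + 1) + p (n - k) + p (n - k + 1)) + p 0 + p (n + 1) := by
  rw [sum_fun_bool_snoc, sum_fun_bool_snoc (fun y => ∑ b, _), sum_fun_bool_eq_sum_finset]
  simp only [dotp_eq_zero_iff hm hw, mu', wt_snoc, wt_indicator, Fintype.sum_bool,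
    Bool.toNat_true, Bool.toNat_false, Nat.cast_one, Nat.cast_zero, add_zero, zero_add, mul_one,
    mul_zero, add_sub_cancel_right, sum_add_distrib]
  have hnone :
      ∑ S : Finset (Fin n), (if ∑ i ∈ S, c i = 0 then p #S + p (#S - 1) else 0) = p 0 := by
    simp_rw [sum_eq_zero_iff_eq_empty_of_pos hc]
    simp [hp_out (-1)]
  have hall : ∑ S : Finset (Fin n),
      (if ∑ i ∈ S, c i = m * (1 + 1) then p (#S + 1 + 1) + p (#S + 1) else 0) = p (n + 1) := by
    simp_rw [show m * (1 + 1) = ∑ i, c i by rw [hm]; ring, sum_eq_sum_univ_iff_eq_univ_of_pos hc]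
    simp [hp_out (n + 1 + 1) (.inr (by omega))]
  have hhalf := two_mul_sum_filter_sum_eq_half hm (by simpa using hk) (by simpa using hsize)
    fun j => p (j + 1) + p j
  rw [Fintype.card_fin, sum_filter] at hhalf
  rw [hnone, hall]
  linarith

end HalvingWeights

theorem stmt3_general (n : ℕ) (c : Fin n → ℤ) (hc : ∀ i, 0 < c i)
    (m : ℤ) (hm : ∑ i, c i = 2 * m)
    (k : ℕ) (hk2 : k + 1 ≤ n)
    (hsize : ∀ S : Finset (Fin n), ∑ i ∈ S, c i = m → S.card = k ∨ S.card = n - k)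
    (w : Fin (n + 2) → ℝ)
    (hw : ∀ i : Fin (n + 2), w i = if h : (i : ℕ) < n then (c ⟨i, h⟩ : ℝ) else -(m : ℝ))
    (p : ℤ → ℝ)
    (hp_nonneg : ∀ t : ℤ, 0 ≤ p t)
    (hp_out : ∀ t : ℤ, (t < 0 ∨ (n : ℤ) + 2 ≤ t) → p t = 0)
    (N : ℕ) (hN : N = {S : Finset (Fin n) | ∑ i ∈ S, c i = m}.ncard) :
    (∑ x : Fin (n + 2) → Bool, if dotp w x = 0 then mu p x else 0)
        = ((N : ℝ) * (p (k : ℤ) + p ((k : ℤ) + 1) + p ((n : ℤ) - (k : ℤ)) + p ((n : ℤ) - (k : ℤ) + 1))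
            + p 0 + p ((n : ℤ) + 1)) / lam (n + 2) p ∧
    (0 < p (k : ℤ) + p ((k : ℤ) + 1) + p ((n : ℤ) - (k : ℤ)) + p ((n : ℤ) - (k : ℤ) + 1) →
      (N : ℝ)
        = (lam (n + 2) p * (∑ x : Fin (n + 2) → Bool, if dotp w x = 0 then mu p x else 0)
              - (p 0 + p ((n : ℤ) + 1)))
          / (p (k : ℤ) + p ((k : ℤ) + 1) + p ((n : ℤ) - (k : ℤ)) + p ((n : ℤ) - (k : ℤ) + 1))) := by
  have hmass := sum_ite_mu'_dotp_eq_zero hc hm (by omega) hsize hw hp_out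
  rw [← Set.toFinset_ofPred, ← Set.ncard_eq_toFinset_card', ← hN] at hmass
  refine ⟨by rw [sum_ite_mu, hmass], fun hpos => ?_⟩
  rw [lam_mul_sum_ite_mu hp_nonneg, hmass]
  field_simp
  ring

theorem stmt3 (n : ℕ) (hn : 1 ≤ n) (c : Fin n → ℤ) (hc : ∀ i, 0 < c i)
    (m : ℤ) (hm : ∑ i, c i = 2 * m)
    (k : ℕ) (hk1 : 1 ≤ k) (hk2 : k + 1 ≤ n)
    (hsize : ∀ S : Finset (Fin n), ∑ i ∈ S, c i = m → S.card = k ∨ S.card = n - k)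
    (w : Fin (n + 2) → ℝ)
    (hw : ∀ i : Fin (n + 2), w i = if h : (i : ℕ) < n then (c ⟨i, h⟩ : ℝ) else -(m : ℝ))
    (p : ℤ → ℝ)
    (hp_nonneg : ∀ t : ℤ, 0 ≤ p t)
    (hp_out : ∀ t : ℤ, (t < 0 ∨ (n : ℤ) + 2 ≤ t) → p t = 0)
    (hp_sum : ∑ t ∈ Finset.range (n + 2), ((n + 1).choose t : ℝ) * p (t : ℤ) = 1)
    (N : ℕ) (hN : N = {S : Finset (Fin n) | ∑ i ∈ S, c i = m}.ncard) :
    (∑ x : Fin (n + 2) → Bool, if dotp w x = 0 then mu p x else 0)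
        = ((N : ℝ) * (p (k : ℤ) + p ((k : ℤ) + 1) + p ((n : ℤ) - (k : ℤ)) + p ((n : ℤ) - (k : ℤ) + 1))
            + p 0 + p ((n : ℤ) + 1)) / lam (n + 2) p ∧
    (0 < p (k : ℤ) + p ((k : ℤ) + 1) + p ((n : ℤ) - (k : ℤ)) + p ((n : ℤ) - (k : ℤ) + 1) →
      (N : ℝ)
        = (lam (n + 2) p * (∑ x : Fin (n + 2) → Bool, if dotp w x = 0 then mu p x else 0)
              - (p 0 + p ((n : ℤ) + 1)))
          / (p (k : ℤ) + p ((k : ℤ) + 1) + p ((n : ℤ) - (k : ℤ)) + p ((n : ℤ) - (k : ℤ) + 1))) :=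
  stmt3_general n c hc m hm k hk2 hsize w hw p hp_nonneg hp_out N hN
end
end

section
/- Let n ≥ 1, let a_1,…,a_n be positive integers with A = Σ_{i=1}^n a_i, and let 0 < y < 1/2. Define the vectors c = (2a_1, 2a_2, …, 2a_n, −A, −A), d = (a_1 − y, a_2, …, a_n, −A/2 + y/2, −A/2 + y/2), and e = (a_1 + y, a_2, …, a_n, −A/2 − y/2, −A/2 − y/2) in ℝ^{n+2}. Then for every x ∈ {-1,1}^{n+2}: |d·x| + |e·x| − |c·x| equals 2y if c·x = 0 and x ∉ {(1,…,1), (−1,…,−1)}, and equals 0 otherwise. -/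
open Finset

noncomputable section

open scoped Classical

/-!
Write `x = (z, s, t)` with `z ∈ {-1,1}^n`. Since `d + e = c`, we have `d·x = D - u` and
`e·x = D + u` with `D = c·x / 2` and `u = y (z₁ - (s + t)/2)`. Here `D` is an integer and
`|u| ≤ 2y < 1`, so `|D - u| + |D + u| = 2|D|` unless `D = 0`, in which case the left side is
`2|u|`. When `c·x = 0`, either `s ≠ t` and `|u| = y`, or `s = t`; then `∑ aᵢ zᵢ = A s` forces
`z = (s, …, s)` by positivity of the `aᵢ`, so `x` is constant and `u = 0`.
-/

lemma chi_mul_self (b : Bool) : chi b * chi b = 1 := by cases b <;> norm_num [chi]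

lemma chi_mul_chi_le_one (p q : Bool) : chi p * chi q ≤ 1 := by
  cases p <;> cases q <;> norm_num [chi]

lemma chi_mul_chi_eq_one_iff {p q : Bool} : chi p * chi q = 1 ↔ p = q := by
  cases p <;> cases q <;> norm_num [chi]

lemma abs_chi_sub_chi_add_chi_div_two_le (p q r : Bool) : |chi p - (chi q + chi r) / 2| ≤ 2 := by
  cases p <;> cases q <;> cases r <;> norm_num [chi]

lemma abs_chi_sub_chi_add_chi_div_two_of_ne (p : Bool) {q r : Bool} (h : q ≠ r) :
    |chi p - (chi q + chi r) / 2| = 1 := by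
  cases p <;> cases q <;> cases r <;> simp_all [chi]

lemma exists_chi_eq_intCast (b : Bool) : ∃ k : ℤ, chi b = k :=
  ⟨if b then 1 else -1, by cases b <;> simp [chi]⟩

lemma exists_chi_add_chi_eq_two_mul_intCast (p q : Bool) : ∃ k : ℤ, chi p + chi q = 2 * k := by
  cases p <;> cases q
  exacts [⟨-1, by norm_num [chi]⟩, ⟨0, by norm_num [chi]⟩, ⟨0, by norm_num [chi]⟩,
    ⟨1, by norm_num [chi]⟩]

lemma abs_sub_add_abs_add_of_abs_le {D u : ℝ} (h : |u| ≤ |D|) :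
    |D - u| + |D + u| = 2 * |D| := by
  rcases le_total 0 D with hD | hD
  · rw [abs_of_nonneg hD] at h ⊢
    obtain ⟨h₁, h₂⟩ := abs_le.mp h
    rw [abs_of_nonneg (by linarith), abs_of_nonneg (by linarith)]
    ring
  · rw [abs_of_nonpos hD] at h ⊢
    obtain ⟨h₁, h₂⟩ := abs_le.mp h
    rw [abs_of_nonpos (by linarith), abs_of_nonpos (by linarith)]
    ring

lemma abs_intCast_sub_add_abs_add_sub_abs_two_mul {k : ℤ} {u : ℝ} (hu : |u| < 1) :
    |k - u| + |k + u| - |2 * (k : ℝ)| = if k = 0 then 2 * |u| else 0 := by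
  split_ifs with hk
  · simp [hk, abs_neg, two_mul]
  · have hku : |u| ≤ |(k : ℝ)| :=
      hu.le.trans (by rw [← Int.cast_abs]; exact_mod_cast Int.one_le_abs hk)
    rw [abs_sub_add_abs_add_of_abs_le hku, abs_mul, abs_two, sub_self]

section dotp

variable {n : ℕ}

lemma dotp_sub (v w : Fin n → ℝ) (x : Fin n → Bool) :
    dotp (fun i => v i - w i) x = dotp v x - dotp w x := by
  simp only [dotp, sub_mul, sum_sub_distrib]

lemma dotp_add (v w : Fin n → ℝ) (x : Fin n → Bool) :
    dotp (fun i => v i + w i) x = dotp v x + dotp w x := by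
  simp only [dotp, add_mul, sum_add_distrib]

lemma dotp_const_mul (r : ℝ) (w : Fin n → ℝ) (x : Fin n → Bool) :
    dotp (fun i => r * w i) x = r * dotp w x := by
  simp only [dotp, mul_assoc, mul_sum]

lemma exists_dotp_intCast_eq (a : Fin n → ℤ) (x : Fin n → Bool) :
    ∃ k : ℤ, dotp (fun i => (a i : ℝ)) x = k := by
  choose k hk using fun i => exists_chi_eq_intCast (x i)
  exact ⟨∑ i, a i * k i, by simp [dotp, hk]⟩

lemma dotp_ite_val_eq_zero (hn : 0 < n) (y : ℝ) (x : Fin n → Bool) :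
    dotp (fun i : Fin n => if (i : ℕ) = 0 then y else 0) x = y * chi (x ⟨0, hn⟩) := by
  rw [dotp, sum_eq_single ⟨0, hn⟩ (fun i _ hi => by rw [if_neg fun h => hi (Fin.ext h), zero_mul])
    (by simp), if_pos rfl]

lemma dotp_castSucc (w : Fin (n + 1) → ℝ) (x : Fin (n + 1) → Bool) :
    dotp w x = dotp (fun i => w i.castSucc) (fun i => x i.castSucc) +
      w (Fin.last n) * chi (x (Fin.last n)) :=
  Fin.sum_univ_castSucc _

lemma dotp_eq_of_eq_dite {w : Fin (n + 2) → ℝ} {f : Fin n → ℝ} {p : ℝ}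
    (hw : ∀ i : Fin (n + 2), w i = if h : (i : ℕ) < n then f ⟨i, h⟩ else p)
    (x : Fin (n + 2) → Bool) :
    dotp w x = dotp f (fun i => x i.castSucc.castSucc) +
      p * (chi (x (Fin.last n).castSucc) + chi (x (Fin.last (n + 1)))) := by
  rw [dotp_castSucc, dotp_castSucc]
  simp only [dotp, hw, Fin.val_castSucc, Fin.is_lt, ↓reduceDIte, Fin.eta, Fin.val_last,
    lt_self_iff_false, add_lt_iff_neg_left, not_lt_zero]
  ring

lemma exists_dotp_eq_two_mul_intCast {a : Fin n → ℤ} {c : Fin (n + 2) → ℝ}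
    (hc : ∀ i : Fin (n + 2),
      c i = if h : (i : ℕ) < n then 2 * (a ⟨i, h⟩ : ℝ) else -∑ j, (a j : ℝ))
    (x : Fin (n + 2) → Bool) : ∃ k : ℤ, dotp c x = 2 * k := by
  obtain ⟨k₁, hk₁⟩ := exists_dotp_intCast_eq a fun i => x i.castSucc.castSucc
  obtain ⟨k₂, hk₂⟩ :=
    exists_chi_add_chi_eq_two_mul_intCast (x (Fin.last n).castSucc) (x (Fin.last (n + 1)))
  refine ⟨k₁ - (∑ j, a j) * k₂, ?_⟩
  rw [dotp_eq_of_eq_dite (f := fun i => 2 * (a i : ℝ)) hc, dotp_const_mul, hk₁, hk₂]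
  push_cast
  ring

lemma eq_const_of_dotp_eq_sum_mul_chi {a : Fin n → ℝ} (ha : ∀ i, 0 < a i) {z : Fin n → Bool}
    {b : Bool} (h : dotp a z = (∑ i, a i) * chi b) : z = fun _ => b := by
  have hsum : ∑ i, a i * (chi (z i) * chi b) = ∑ i, a i := by
    rw [← mul_one (∑ i, a i), ← chi_mul_self b, ← mul_assoc, ← h, dotp, sum_mul]
    simp only [mul_assoc]
  rw [sum_eq_sum_iff_of_le fun i _ => mul_le_of_le_one_right (ha i).le (chi_mul_chi_le_one _ _)]
    at hsum
  funext i
  exact chi_mul_chi_eq_one_iff.mp ((mul_eq_left₀ (ha i).ne').mp (hsum i (mem_univ i)))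

lemma eq_const_of_castSucc_castSucc {x : Fin (n + 2) → Bool} {b : Bool}
    (hz : ∀ i : Fin n, x i.castSucc.castSucc = b) (hs : x (Fin.last n).castSucc = b)
    (ht : x (Fin.last (n + 1)) = b) : x = fun _ => b :=
  funext (Fin.lastCases ht (Fin.lastCases hs hz))

lemma eq_const_of_dotp_eq_zero {a : Fin n → ℝ} (ha : ∀ i, 0 < a i) {c : Fin (n + 2) → ℝ}
    (hc : ∀ i : Fin (n + 2), c i = if h : (i : ℕ) < n then 2 * a ⟨i, h⟩ else -∑ j, a j)
    {x : Fin (n + 2) → Bool} (hx : dotp c x = 0)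
    (hst : x (Fin.last n).castSucc = x (Fin.last (n + 1))) :
    x = fun _ => x (Fin.last (n + 1)) := by
  rw [dotp_eq_of_eq_dite (f := fun i => 2 * a i) hc, dotp_const_mul, hst] at hx
  have hz := eq_const_of_dotp_eq_sum_mul_chi ha (b := x (Fin.last (n + 1))) (by linarith)
  exact eq_const_of_castSucc_castSucc (congrFun hz) hst rfl

lemma abs_chi_sub_chi_add_chi_div_two_of_dotp_eq_zero {a : Fin n → ℝ} (ha : ∀ i, 0 < a i)
    {c : Fin (n + 2) → ℝ}
    (hc : ∀ i : Fin (n + 2), c i = if h : (i : ℕ) < n then 2 * a ⟨i, h⟩ else -∑ j, a j)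
    (hn : 0 < n) {x : Fin (n + 2) → Bool} (hx : dotp c x = 0) :
    |chi (x (⟨0, hn⟩ : Fin n).castSucc.castSucc) -
        (chi (x (Fin.last n).castSucc) + chi (x (Fin.last (n + 1)))) / 2| =
      if x ≠ (fun _ => true) ∧ x ≠ (fun _ => false) then 1 else 0 := by
  by_cases hst : x (Fin.last n).castSucc = x (Fin.last (n + 1))
  · have hconst := eq_const_of_dotp_eq_zero ha hc hx hst
    generalize x (Fin.last (n + 1)) = b at hconst
    subst hconst
    cases b <;> norm_num [chi]
  · rw [abs_chi_sub_chi_add_chi_div_two_of_ne _ hst,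
      if_pos ⟨fun h => hst (by simp [h]), fun h => hst (by simp [h])⟩]

end dotp

theorem stmt4 (n : ℕ) (hn : 1 ≤ n) (a : Fin n → ℤ) (ha : ∀ i, 0 < a i)
    (A : ℤ) (hA : A = ∑ i, a i)
    (y : ℝ) (hy0 : 0 < y) (hy1 : y < 1 / 2)
    (c d e : Fin (n + 2) → ℝ)
    (hc : ∀ i : Fin (n + 2), c i =
      if h : (i : ℕ) < n then 2 * (a ⟨i, h⟩ : ℝ) else -(A : ℝ))
    (hd : ∀ i : Fin (n + 2), d i =
      if h : (i : ℕ) < n then (a ⟨i, h⟩ : ℝ) - (if (i : ℕ) = 0 then y else 0)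
      else -(A : ℝ) / 2 + y / 2)
    (he : ∀ i : Fin (n + 2), e i =
      if h : (i : ℕ) < n then (a ⟨i, h⟩ : ℝ) + (if (i : ℕ) = 0 then y else 0)
      else -(A : ℝ) / 2 - y / 2) :
    ∀ x : Fin (n + 2) → Bool,
      |dotp d x| + |dotp e x| - |dotp c x| =
        if dotp c x = 0 ∧ x ≠ (fun _ => true) ∧ x ≠ (fun _ => false) then 2 * y
        else 0 := by
  intro x
  have hA' : (A : ℝ) = ∑ i, (a i : ℝ) := by rw [hA]; push_cast; rfl
  rw [hA'] at hc hd he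
  set v := chi (x (⟨0, hn⟩ : Fin n).castSucc.castSucc) -
    (chi (x (Fin.last n).castSucc) + chi (x (Fin.last (n + 1)))) / 2 with hv
  have hcx := dotp_eq_of_eq_dite (f := fun i => 2 * (a i : ℝ)) hc x
  rw [dotp_const_mul] at hcx
  have hdx : dotp d x = dotp c x / 2 - y * v := by
    rw [dotp_eq_of_eq_dite (f := fun i => (a i : ℝ) - if (i : ℕ) = 0 then y else 0) hd,
      dotp_sub, dotp_ite_val_eq_zero hn, hcx, hv]
    ring
  have hex : dotp e x = dotp c x / 2 + y * v := by
    rw [dotp_eq_of_eq_dite (f := fun i => (a i : ℝ) + if (i : ℕ) = 0 then y else 0) he,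
      dotp_add, dotp_ite_val_eq_zero hn, hcx, hv]
    ring
  have hu : |y * v| < 1 := by
    rw [abs_mul, abs_of_pos hy0]
    nlinarith [abs_chi_sub_chi_add_chi_div_two_le (x (⟨0, hn⟩ : Fin n).castSucc.castSucc)
      (x (Fin.last n).castSucc) (x (Fin.last (n + 1)))]
  obtain ⟨k, hk⟩ := exists_dotp_eq_two_mul_intCast hc x
  rw [hdx, hex, hk, mul_div_cancel_left₀ _ two_ne_zero,
    abs_intCast_sub_add_abs_add_sub_abs_two_mul hu, ← hk]
  by_cases hk0 : k = 0
  · have hc0 : dotp c x = 0 := by rw [hk, hk0, Int.cast_zero, mul_zero]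
    rw [if_pos hk0, abs_mul, abs_of_pos hy0,
      abs_chi_sub_chi_add_chi_div_two_of_dotp_eq_zero (fun i => Int.cast_pos.mpr (ha i)) hc hn hc0]
    simp [hc0]
  · have hc0 : dotp c x ≠ 0 := by
      rw [hk]; exact mul_ne_zero two_ne_zero (Int.cast_ne_zero.mpr hk0)
    rw [if_neg hk0, if_neg fun h => hc0 h.1]
end
end

section
/- Let n ≥ 1, let a_1,…,a_n be positive integers with A = Σ_{i=1}^n a_i, let 0 < y < 1/2, and let p = (p_0,…,p_{n+1}) be a probability vector on {-1,1}^{n+2}. Define c = (2a_1, …, 2a_n, −A, −A), d = (a_1 − y, a_2, …, a_n, −A/2 + y/2, −A/2 + y/2), and e = (a_1 + y, a_2, …, a_n, −A/2 − y/2, −A/2 − y/2). Then E_{x ∼ μ_p}[|d·x|] + E_{x ∼ μ_p}[|e·x|] − E_{x ∼ μ_p}[|c·x|] = 2y · Pr_{x ∼ μ_p}[ c·x = 0 and x ∉ {(1,…,1), (−1,…,−1)} ]. -/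
open Finset

noncomputable section

open scoped Classical

/-!
Write `d = c/2 + y w` and `e = c/2 - y w` with `w = (-1, 0, …, 0, 1/2, 1/2)`; the identity then
holds pointwise in `x`. The entries of `c` are integers summing to `0`, so `c·x` is an even
integer. If `c·x ≠ 0` then `|y w·x| ≤ 2y < 1 ≤ |c·x/2|`, hence `|d·x| + |e·x| = |c·x|`.
If `c·x = 0` the left side is `2y |w·x|`: when the last two coordinates of `x` agree, positivity
of the `a_i` forces `x` to be constant and `w·x = 0`; otherwise `w·x = ∓1`.
-/

lemma abs_add_add_abs_sub_of_abs_le {s t : ℝ} (h : |t| ≤ |s|) :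
    |s + t| + |s - t| = 2 * |s| := by
  rcases abs_cases s with ⟨hs, -⟩ | ⟨hs, -⟩ <;> rw [hs] at h ⊢ <;>
    obtain ⟨h₁, h₂⟩ := abs_le.mp h
  · rw [abs_of_nonneg (by linarith), abs_of_nonneg (by linarith)]; ring
  · rw [abs_of_nonpos (by linarith), abs_of_nonpos (by linarith)]; ring

lemma chi_not (b : Bool) : chi (!b) = -chi b := by
  cases b <;> simp [chi]

section dotp

variable {m : ℕ}

lemma dotp_eq_dotProduct (w : Fin m → ℝ) (x : Fin m → Bool) :
    dotp w x = w ⬝ᵥ fun i => chi (x i) := rfl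

lemma dotp_not (w : Fin m → ℝ) (x : Fin m → Bool) :
    dotp w (fun i => !x i) = -dotp w x := by
  simp only [dotp, chi_not, mul_neg, sum_neg_distrib]

lemma dotp_eq_sum_sub_two_mul_sum_false (w : Fin m → ℝ) (x : Fin m → Bool) :
    dotp w x = ∑ i, w i - 2 * ∑ i with x i = false, w i := by
  rw [sum_filter, mul_sum, ← sum_sub_distrib, dotp]
  refine sum_congr rfl fun i _ => ?_
  cases x i <;> simp [chi, two_mul]

lemma eq_const_true_of_dotp_eq_sum {w : Fin m → ℝ} {x : Fin m → Bool}
    (hw : ∀ i, x i = false → 0 < w i) (h : dotp w x = ∑ i, w i) :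
    x = fun _ => true := by
  have hfalse : ∑ i with x i = false, w i = 0 := by
    rw [dotp_eq_sum_sub_two_mul_sum_false] at h; linarith
  funext i
  by_contra hi
  have hne : ({j | x j = false} : Finset (Fin m)).Nonempty := ⟨i, by simpa using hi⟩
  exact (sum_pos (fun j hj => hw j (mem_filter.mp hj).2) hne).ne' hfalse

/-- An integer vector with zero sum has even inner product with every `x`. -/
lemma two_le_abs_dotp_of_sum_eq_zero {w : Fin m → ℝ} (hw : ∀ i, ∃ k : ℤ, w i = k)
    (hsum : ∑ i, w i = 0) {x : Fin m → Bool} (h : dotp w x ≠ 0) :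
    2 ≤ |dotp w x| := by
  choose k hk using hw
  have hdot : dotp w x = -2 * ((∑ i with x i = false, k i : ℤ) : ℝ) := by
    rw [dotp_eq_sum_sub_two_mul_sum_false, hsum]; push_cast; simp only [hk]; ring
  rw [hdot] at h ⊢
  have hK : ∑ i with x i = false, k i ≠ 0 := by rintro hK; simp [hK] at h
  rw [abs_mul, abs_neg, abs_two]
  have hK_abs : (1 : ℝ) ≤ |((∑ i with x i = false, k i : ℤ) : ℝ)| := by
    exact_mod_cast Int.one_le_abs hK
  linarith

end dotp

section vectors

variable {n : ℕ}

def cVec (a : Fin n → ℤ) (A : ℤ) : Fin (n + 2) → ℝ :=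
  fun i => if h : (i : ℕ) < n then 2 * (a ⟨i, h⟩ : ℝ) else -(A : ℝ)

/-- The vector `d` of the statement; `e` is `dVec a A (-y)`. -/
def dVec (a : Fin n → ℤ) (A : ℤ) (y : ℝ) : Fin (n + 2) → ℝ :=
  fun i => if h : (i : ℕ) < n then (a ⟨i, h⟩ : ℝ) - (if (i : ℕ) = 0 then y else 0)
    else -(A : ℝ) / 2 + y / 2

variable (n) in
def perturbation : Fin (n + 2) → ℝ :=
  Pi.single 0 (-1) + Pi.single (Fin.last n).castSucc (1 / 2) + Pi.single (Fin.last (n + 1)) (1 / 2)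

lemma dotp_perturbation (x : Fin (n + 2) → Bool) :
    dotp (perturbation n) x
      = -chi (x 0) + chi (x (Fin.last n).castSucc) / 2 + chi (x (Fin.last (n + 1))) / 2 := by
  simp only [dotp_eq_dotProduct, perturbation, add_dotProduct, single_dotProduct]
  ring

lemma abs_dotp_perturbation_le (x : Fin (n + 2) → Bool) : |dotp (perturbation n) x| ≤ 2 := by
  rw [dotp_perturbation]
  cases x 0 <;> cases x (Fin.last n).castSucc <;> cases x (Fin.last (n + 1)) <;> norm_num [chi]

lemma dotp_perturbation_const (b : Bool) : dotp (perturbation n) (fun _ => b) = 0 := by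
  rw [dotp_perturbation]
  cases b <;> norm_num [chi]

lemma abs_dotp_perturbation_of_ne {x : Fin (n + 2) → Bool}
    (h : x (Fin.last n).castSucc ≠ x (Fin.last (n + 1))) : |dotp (perturbation n) x| = 1 := by
  revert h
  rw [dotp_perturbation]
  cases x 0 <;> cases x (Fin.last n).castSucc <;> cases x (Fin.last (n + 1)) <;> norm_num [chi]

lemma dVec_eq (hn : 1 ≤ n) (a : Fin n → ℤ) (A : ℤ) (y : ℝ) :
    dVec a A y = (1 / 2 : ℝ) • cVec a A + y • perturbation n := by
  funext i
  simp only [dVec, cVec, perturbation, Pi.add_apply, Pi.smul_apply, smul_eq_mul,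
    Pi.single_apply, Fin.ext_iff, Fin.val_zero, Fin.val_castSucc, Fin.val_last]
  split_ifs <;> first | omega | ring

lemma dotp_dVec (hn : 1 ≤ n) (a : Fin n → ℤ) (A : ℤ) (y : ℝ) (x : Fin (n + 2) → Bool) :
    dotp (dVec a A y) x = dotp (cVec a A) x / 2 + y * dotp (perturbation n) x := by
  simp only [dotp_eq_dotProduct, dVec_eq hn, add_dotProduct, smul_dotProduct, smul_eq_mul]
  ring

lemma sum_cVec (a : Fin n → ℤ) : ∑ i, cVec a (∑ j, a j) i = 0 := by
  simp only [cVec, Int.cast_sum, Fin.sum_univ_castSucc, Fin.val_castSucc, Fin.is_lt,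
    ↓reduceDIte, Fin.eta, ← mul_sum, Fin.val_last, lt_self_iff_false, add_lt_iff_neg_left,
    not_lt_zero]
  ring

lemma cVec_isInt (a : Fin n → ℤ) (A : ℤ) (i : Fin (n + 2)) : ∃ k : ℤ, cVec a A i = k := by
  unfold cVec
  split_ifs
  · exact ⟨2 * a _, by push_cast; ring⟩
  · exact ⟨-A, by push_cast; ring⟩

end vectors

section constancy

variable {n : ℕ} {a : Fin n → ℤ} {x : Fin (n + 2) → Bool}

lemma eq_const_true_of_dotp_cVec_eq_zero (ha : ∀ i, 0 < a i)
    (h : dotp (cVec a (∑ j, a j)) x = 0)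
    (hu : x (Fin.last n).castSucc = true) (hv : x (Fin.last (n + 1)) = true) :
    x = fun _ => true := by
  refine eq_const_true_of_dotp_eq_sum (fun i hi => ?_) (by rw [h, sum_cVec])
  unfold cVec
  split_ifs with hin
  · exact mul_pos two_pos (Int.cast_pos.mpr (ha _))
  · obtain rfl | rfl : i = (Fin.last n).castSucc ∨ i = Fin.last (n + 1) := by
      rw [Fin.ext_iff, Fin.ext_iff]; simp only [Fin.val_castSucc, Fin.val_last]; omega
    all_goals simp_all

lemma eq_const_of_dotp_cVec_eq_zero (ha : ∀ i, 0 < a i)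
    (h : dotp (cVec a (∑ j, a j)) x = 0)
    (huv : x (Fin.last n).castSucc = x (Fin.last (n + 1))) :
    x = (fun _ => true) ∨ x = (fun _ => false) := by
  cases hu : x (Fin.last n).castSucc
  · right
    have hnot := eq_const_true_of_dotp_cVec_eq_zero (x := fun i => !x i) ha
      (by rw [dotp_not, h, neg_zero]) (by simp [hu]) (by simp [← huv, hu])
    funext i
    simpa using congrFun hnot i
  · exact .inl (eq_const_true_of_dotp_cVec_eq_zero ha h hu (huv ▸ hu))

end constancy

lemma abs_dotp_dVec_add_abs_dotp_dVec_neg_sub_abs_dotp_cVec {n : ℕ} (hn : 1 ≤ n)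
    {a : Fin n → ℤ} (ha : ∀ i, 0 < a i) {y : ℝ} (hy0 : 0 < y) (hy1 : y < 1 / 2)
    (x : Fin (n + 2) → Bool) :
    |dotp (dVec a (∑ j, a j) y) x| + |dotp (dVec a (∑ j, a j) (-y)) x|
        - |dotp (cVec a (∑ j, a j)) x|
      = if dotp (cVec a (∑ j, a j)) x = 0 ∧ x ≠ (fun _ => true) ∧ x ≠ (fun _ => false)
        then 2 * y else 0 := by
  rw [dotp_dVec hn, dotp_dVec hn, neg_mul, ← sub_eq_add_neg]
  set C := dotp (cVec a (∑ j, a j)) x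
  set W := dotp (perturbation n) x
  by_cases hC : C = 0
  · rw [hC, zero_div, zero_add, zero_sub, abs_neg, abs_zero, sub_zero, abs_mul, abs_of_pos hy0]
    by_cases hconst : x = (fun _ => true) ∨ x = (fun _ => false)
    · have hW : W = 0 := by
        rcases hconst with rfl | rfl <;> exact dotp_perturbation_const _
      simp only [hW, abs_zero]
      rw [if_neg (by tauto)]; ring
    · have hW : |W| = 1 := abs_dotp_perturbation_of_ne fun huv =>
        hconst (eq_const_of_dotp_cVec_eq_zero ha hC huv)
      rw [hW, if_pos (by tauto)]; ring
  · have hCge : 2 ≤ |C| := two_le_abs_dotp_of_sum_eq_zero (cVec_isInt a _) (sum_cVec a) hC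
    have hsmall : |y * W| ≤ |C / 2| := by
      rw [abs_mul, abs_of_pos hy0, abs_div, abs_two]
      nlinarith [abs_dotp_perturbation_le x, abs_nonneg W]
    rw [abs_add_add_abs_sub_of_abs_le hsmall, abs_div, abs_two, if_neg (fun h => hC h.1)]
    ring

theorem stmt5_general (n : ℕ) (hn : 1 ≤ n) (a : Fin n → ℤ) (ha : ∀ i, 0 < a i)
    (A : ℤ) (hA : A = ∑ i, a i)
    (y : ℝ) (hy0 : 0 < y) (hy1 : y < 1 / 2)
    (p : ℤ → ℝ)
    (c d e : Fin (n + 2) → ℝ)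
    (hc : ∀ i : Fin (n + 2), c i =
      if h : (i : ℕ) < n then 2 * (a ⟨i, h⟩ : ℝ) else -(A : ℝ))
    (hd : ∀ i : Fin (n + 2), d i =
      if h : (i : ℕ) < n then (a ⟨i, h⟩ : ℝ) - (if (i : ℕ) = 0 then y else 0)
      else -(A : ℝ) / 2 + y / 2)
    (he : ∀ i : Fin (n + 2), e i =
      if h : (i : ℕ) < n then (a ⟨i, h⟩ : ℝ) + (if (i : ℕ) = 0 then y else 0)
      else -(A : ℝ) / 2 - y / 2) :
    (∑ x : Fin (n + 2) → Bool, mu p x * |dotp d x|)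
      + (∑ x : Fin (n + 2) → Bool, mu p x * |dotp e x|)
      - (∑ x : Fin (n + 2) → Bool, mu p x * |dotp c x|)
    = 2 * y * ∑ x : Fin (n + 2) → Bool,
        if dotp c x = 0 ∧ x ≠ (fun _ => true) ∧ x ≠ (fun _ => false) then mu p x
        else 0 := by
  subst hA
  obtain rfl : c = cVec a (∑ i, a i) := funext hc
  obtain rfl : d = dVec a (∑ i, a i) y := funext hd
  obtain rfl : e = dVec a (∑ i, a i) (-y) := funext fun i => by
    rw [he, dVec]; split_ifs <;> ring
  rw [← sum_add_distrib, ← sum_sub_distrib, mul_sum]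
  refine sum_congr rfl fun x _ => ?_
  rw [← mul_add, ← mul_sub, abs_dotp_dVec_add_abs_dotp_dVec_neg_sub_abs_dotp_cVec hn ha hy0 hy1]
  split_ifs <;> ring

theorem stmt5 (n : ℕ) (hn : 1 ≤ n) (a : Fin n → ℤ) (ha : ∀ i, 0 < a i)
    (A : ℤ) (hA : A = ∑ i, a i)
    (y : ℝ) (hy0 : 0 < y) (hy1 : y < 1 / 2)
    (p : ℤ → ℝ)
    (hp_nonneg : ∀ t : ℤ, 0 ≤ p t)
    (hp_out : ∀ t : ℤ, (t < 0 ∨ (n : ℤ) + 2 ≤ t) → p t = 0)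
    (hp_sum : ∑ t ∈ Finset.range (n + 2), ((n + 1).choose t : ℝ) * p (t : ℤ) = 1)
    (c d e : Fin (n + 2) → ℝ)
    (hc : ∀ i : Fin (n + 2), c i =
      if h : (i : ℕ) < n then 2 * (a ⟨i, h⟩ : ℝ) else -(A : ℝ))
    (hd : ∀ i : Fin (n + 2), d i =
      if h : (i : ℕ) < n then (a ⟨i, h⟩ : ℝ) - (if (i : ℕ) = 0 then y else 0)
      else -(A : ℝ) / 2 + y / 2)
    (he : ∀ i : Fin (n + 2), e i =
      if h : (i : ℕ) < n then (a ⟨i, h⟩ : ℝ) + (if (i : ℕ) = 0 then y else 0)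
      else -(A : ℝ) / 2 - y / 2) :
    (∑ x : Fin (n + 2) → Bool, mu p x * |dotp d x|)
      + (∑ x : Fin (n + 2) → Bool, mu p x * |dotp e x|)
      - (∑ x : Fin (n + 2) → Bool, mu p x * |dotp c x|)
    = 2 * y * ∑ x : Fin (n + 2) → Bool,
        if dotp c x = 0 ∧ x ≠ (fun _ => true) ∧ x ≠ (fun _ => false) then mu p x
        else 0 :=
  stmt5_general n hn a ha A hA y hy0 hy1 p c d e hc hd he
end
end

section
/- Let n ≥ 1, let p = (p_0,…,p_{n-1}) be a probability vector, let f : {-1,1}^n → {-1,1} be any Boolean function, and let a ∈ ℝ^n satisfy Σ_{i=1}^n a_i = 0. Then Σ_{i=1}^n a_i · \tilde f^p(i) = (1/2) · Σ_{x ∈ {-1,1}^n} μ'_p(x) · f(x) · (a·x); that is, when the entries of a sum to zero, the constant term C_f^p = Σ_x f(x)(p_{wt(x)-1} − p_{wt(x)}) contributes nothing to the linear functional a applied to the semivalue vector of f. -/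
open Finset

noncomputable section

/-! With `w = wt x`, `(if x_i then p_{w-1} else p_w) · x_i = ½ μ'_p(x) x_i + ½ (p_{w-1} - p_w)`,
so every semivalue is `½ ∑_x μ'_p(x) f(x) x_i` plus the same constant `½ C_f^p`; pairing with `a`
multiplies that constant by `∑ a_i = 0`. -/

/-- The constant term `C_f^p = ∑_x f(x) (p_{wt x - 1} - p_{wt x})` of the semivalues. -/
def semivalueConst {n : ℕ} (p : ℤ → ℝ) (f : (Fin n → Bool) → ℝ) : ℝ :=
  ∑ x : Fin n → Bool, f x * (p (wt x - 1) - p (wt x))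

lemma ite_mul_chi (b : Bool) (u v : ℝ) :
    (if b then u else v) * chi b = (1 / 2) * ((v + u) * chi b + (u - v)) := by
  cases b <;> simp only [chi, Bool.false_eq_true, if_true, if_false] <;> ring

lemma semivalue_eq_half_add {n : ℕ} (p : ℤ → ℝ) (f : (Fin n → Bool) → ℝ) (i : Fin n) :
    semivalue p f i
      = (1 / 2) * (∑ x : Fin n → Bool, mu' p x * f x * chi (x i) + semivalueConst p f) := by
  simp only [semivalue, semivalueConst, mu', mul_right_comm _ (f _), ite_mul_chi,
    ← sum_add_distrib, mul_sum]
  exact sum_congr rfl fun x _ => by ring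

lemma sum_mul_semivalue {n : ℕ} (p : ℤ → ℝ) (f : (Fin n → Bool) → ℝ) (a : Fin n → ℝ) :
    ∑ i, a i * semivalue p f i
      = (1 / 2) * (∑ x : Fin n → Bool, mu' p x * f x * dotp a x
          + (∑ i, a i) * semivalueConst p f) := by
  simp only [semivalue_eq_half_add, dotp, mul_sum, sum_mul, mul_add, sum_add_distrib]
  rw [sum_comm]
  congr 1
  · exact sum_congr rfl fun x _ => sum_congr rfl fun i _ => by ring
  · exact sum_congr rfl fun i _ => by ring

theorem stmt7_general (n : ℕ) (p : ℤ → ℝ)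
    (f : (Fin n → Bool) → ℝ)
    (a : Fin n → ℝ) (ha : ∑ i, a i = 0) :
    ∑ i, a i * semivalue p f i
      = (1 / 2) * ∑ x : Fin n → Bool, mu' p x * f x * dotp a x := by
  rw [sum_mul_semivalue, ha, zero_mul, add_zero]

theorem stmt7 (n : ℕ) (hn : 1 ≤ n) (p : ℤ → ℝ)
    (hp_nonneg : ∀ t : ℤ, 0 ≤ p t)
    (hp_out : ∀ t : ℤ, (t < 0 ∨ (n : ℤ) ≤ t) → p t = 0)
    (hp_sum : ∑ t ∈ Finset.range n, ((n - 1).choose t : ℝ) * p (t : ℤ) = 1)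
    (f : (Fin n → Bool) → ℝ) (hf : ∀ x, f x = 1 ∨ f x = -1)
    (a : Fin n → ℝ) (ha : ∑ i, a i = 0) :
    ∑ i, a i * semivalue p f i
      = (1 / 2) * ∑ x : Fin n → Bool, mu' p x * f x * dotp a x :=
  stmt7_general n p f a ha
end
end

section
/- Let n ≥ 1, let p = (p_0,…,p_{n-1}) be a probability vector, and let a ∈ ℝ^n satisfy Σ_{i=1}^n a_i = 0. Then for every Boolean function f : {-1,1}^n → {-1,1}, Σ_{i=1}^n a_i · \tilde f^p(i) ≤ (1/2) · Σ_{x ∈ {-1,1}^n} μ'_p(x) · |a·x|, and equality holds for the linear threshold function f(x) = sign(a·x). Consequently, the maximum of Σ_{i=1}^n a_i · \tilde f^p(i) over all Boolean functions f : {-1,1}^n → {-1,1} equals (Λ(p)/2) · E_{x ∼ μ_p}[|a·x|]. -/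
/-!
Splitting the semivalue weight of `x` at coordinate `i` as
`(μ'_p(x) x_i + p_{wt x - 1} - p_{wt x}) / 2`, the second part does not depend on `i`, so it
disappears from `∑ a_i f̃(i)` when `∑ a_i = 0`. What remains is
`(1/2) ∑_x μ'_p(x) f(x) (a·x)`, and for `f(x) = ±1` each summand is at most
`μ'_p(x) |a·x|`, with equality for `f(x) = sign(a·x)`.
-/

open Finset

noncomputable section

lemma sgn_mul_self (z : ℝ) : sgn z * z = |z| := by
  unfold sgn
  split_ifs with h
  · rw [one_mul, abs_of_nonneg h]
  · rw [neg_one_mul, abs_of_neg (not_le.1 h)]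

lemma sgn_eq_one_or_neg_one (z : ℝ) : sgn z = 1 ∨ sgn z = -1 := by
  unfold sgn
  split_ifs <;> simp

lemma mu'_nonneg {n : ℕ} {p : ℤ → ℝ} (hp : ∀ t, 0 ≤ p t) (x : Fin n → Bool) : 0 ≤ mu' p x :=
  add_nonneg (hp _) (hp _)

lemma semivalue_weight_mul_chi {n : ℕ} (p : ℤ → ℝ) (x : Fin n → Bool) (i : Fin n) :
    (if x i then p (wt x - 1) else p (wt x)) * chi (x i)
      = (mu' p x * chi (x i) + (p (wt x - 1) - p (wt x))) / 2 := by
  cases x i <;> simp only [chi, mu', Bool.false_eq_true, if_true, if_false] <;> ring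

theorem sum_mul_semivalue_eq {n : ℕ} (p : ℤ → ℝ) {a : Fin n → ℝ} (ha : ∑ i, a i = 0)
    (f : (Fin n → Bool) → ℝ) :
    ∑ i, a i * semivalue p f i = (1 / 2) * ∑ x, mu' p x * (f x * dotp a x) := by
  simp only [semivalue, mul_sum]
  rw [sum_comm]
  refine sum_congr rfl fun x _ => ?_
  have hterm : ∀ i, a i * ((if x i then p (wt x - 1) else p (wt x)) * f x * chi (x i))
      = f x / 2 * (mu' p x * (a i * chi (x i)) + (p (wt x - 1) - p (wt x)) * a i) := by
    intro i
    rw [mul_right_comm _ (f x), semivalue_weight_mul_chi]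
    ring
  simp only [hterm, ← mul_sum, sum_add_distrib, ha, dotp]
  ring

theorem sum_mul_semivalue_le {n : ℕ} {p : ℤ → ℝ} (hp : ∀ t, 0 ≤ p t) {a : Fin n → ℝ}
    (ha : ∑ i, a i = 0) {f : (Fin n → Bool) → ℝ} (hf : ∀ x, f x = 1 ∨ f x = -1) :
    ∑ i, a i * semivalue p f i ≤ (1 / 2) * ∑ x, mu' p x * |dotp a x| := by
  rw [sum_mul_semivalue_eq p ha f]
  gcongr with x _
  · exact mu'_nonneg hp x
  calc f x * dotp a x ≤ |f x * dotp a x| := le_abs_self _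
    _ = |dotp a x| := by rw [abs_mul]; rcases hf x with h | h <;> simp [h]

theorem sum_mul_semivalue_sgn {n : ℕ} (p : ℤ → ℝ) {a : Fin n → ℝ} (ha : ∑ i, a i = 0)
    {f : (Fin n → Bool) → ℝ} (hf : ∀ x, f x = sgn (dotp a x)) :
    ∑ i, a i * semivalue p f i = (1 / 2) * ∑ x, mu' p x * |dotp a x| := by
  simp only [sum_mul_semivalue_eq p ha f, hf, sgn_mul_self]

lemma exists_wt_eq {n t : ℕ} (ht : t ≤ n) : ∃ x : Fin n → Bool, wt x = t := by
  refine ⟨fun i => decide ((i : ℕ) < t), ?_⟩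
  have hfilter : (univ.filter fun i : Fin n => decide ((i : ℕ) < t) = true)
      = (range t).attachFin fun _ hm => (mem_range.1 hm).trans_le ht := by
    ext i
    simp
  rw [wt, hfilter, card_attachFin, card_range]

theorem lam_pos {n : ℕ} {p : ℤ → ℝ} (hp : ∀ t, 0 ≤ p t)
    (hp_sum : ∑ t ∈ range n, ((n - 1).choose t : ℝ) * p t = 1) : 0 < lam n p := by
  obtain ⟨t, ht, hpt⟩ : ∃ t ∈ range n, p t ≠ 0 := by
    by_contra! h
    rw [sum_eq_zero fun t ht => by rw [h t ht, mul_zero]] at hp_sum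
    exact zero_ne_one hp_sum
  obtain ⟨x, hx⟩ := exists_wt_eq (mem_range.1 ht).le
  calc (0 : ℝ) < mu' p x := by
        rw [mu', hx]
        exact add_pos_of_pos_of_nonneg ((hp t).lt_of_ne' hpt) (hp _)
    _ ≤ lam n p := single_le_sum (fun y _ => mu'_nonneg hp y) (mem_univ x)

lemma lam_div_two_mul_sum_mu {n : ℕ} {p : ℤ → ℝ} (hlam : lam n p ≠ 0)
    (g : (Fin n → Bool) → ℝ) :
    lam n p / 2 * ∑ x, mu p x * g x = (1 / 2) * ∑ x, mu' p x * g x := by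
  simp only [mul_sum, mu]
  refine sum_congr rfl fun x _ => ?_
  field_simp

theorem stmt8_general (n : ℕ) (p : ℤ → ℝ)
    (hp_nonneg : ∀ t : ℤ, 0 ≤ p t)
    (hp_sum : ∑ t ∈ Finset.range n, ((n - 1).choose t : ℝ) * p (t : ℤ) = 1)
    (a : Fin n → ℝ) (ha : ∑ i, a i = 0) :
    (∀ f : (Fin n → Bool) → ℝ, (∀ x, f x = 1 ∨ f x = -1) →
        ∑ i, a i * semivalue p f i
          ≤ (1 / 2) * ∑ x : Fin n → Bool, mu' p x * |dotp a x|) ∧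
    (∀ f : (Fin n → Bool) → ℝ, (∀ x, f x = sgn (dotp a x)) →
        ∑ i, a i * semivalue p f i
          = (1 / 2) * ∑ x : Fin n → Bool, mu' p x * |dotp a x|) ∧
    IsGreatest {v : ℝ | ∃ f : (Fin n → Bool) → ℝ,
        (∀ x, f x = 1 ∨ f x = -1) ∧ v = ∑ i, a i * semivalue p f i}
      (lam n p / 2 * ∑ x : Fin n → Bool, mu p x * |dotp a x|) := by
  refine ⟨fun f hf => sum_mul_semivalue_le hp_nonneg ha hf,
    fun f hf => sum_mul_semivalue_sgn p ha hf, ?_⟩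
  rw [lam_div_two_mul_sum_mu (lam_pos hp_nonneg hp_sum).ne']
  refine ⟨⟨fun x => sgn (dotp a x), fun x => sgn_eq_one_or_neg_one _,
    (sum_mul_semivalue_sgn p ha fun x => rfl).symm⟩, ?_⟩
  rintro v ⟨f, hf, rfl⟩
  exact sum_mul_semivalue_le hp_nonneg ha hf

theorem stmt8 (n : ℕ) (hn : 1 ≤ n) (p : ℤ → ℝ)
    (hp_nonneg : ∀ t : ℤ, 0 ≤ p t)
    (hp_out : ∀ t : ℤ, (t < 0 ∨ (n : ℤ) ≤ t) → p t = 0)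
    (hp_sum : ∑ t ∈ Finset.range n, ((n - 1).choose t : ℝ) * p (t : ℤ) = 1)
    (a : Fin n → ℝ) (ha : ∑ i, a i = 0) :
    (∀ f : (Fin n → Bool) → ℝ, (∀ x, f x = 1 ∨ f x = -1) →
        ∑ i, a i * semivalue p f i
          ≤ (1 / 2) * ∑ x : Fin n → Bool, mu' p x * |dotp a x|) ∧
    (∀ f : (Fin n → Bool) → ℝ, (∀ x, f x = sgn (dotp a x)) →
        ∑ i, a i * semivalue p f i
          = (1 / 2) * ∑ x : Fin n → Bool, mu' p x * |dotp a x|) ∧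
    IsGreatest {v : ℝ | ∃ f : (Fin n → Bool) → ℝ,
        (∀ x, f x = 1 ∨ f x = -1) ∧ v = ∑ i, a i * semivalue p f i}
      (lam n p / 2 * ∑ x : Fin n → Bool, mu p x * |dotp a x|) :=
  stmt8_general n p hp_nonneg hp_sum a ha
end
end

section
/- Let n ≥ 1, let a_1,…,a_n > 0 be reals with A = Σ_{i=1}^n a_i, let p = (p_0,…,p_{n+1}) be a probability vector on {-1,1}^{n+2}, and define the linear threshold functions f(x) = sign(Σ_{i=1}^n a_i x_i − (A/2)x_{n+1} − (A/2)x_{n+2}) and g(x) = sign(Σ_{i=1}^n a_i x_i + (A/2)x_{n+1} + (A/2)x_{n+2}) on {-1,1}^{n+2}. Then for each i ∈ {n+1, n+2}: \tilde g^p(i) = \tilde f^p(i) + 2·Σ_{t=0}^{n−1} binom(n,t)·(p_t + p_{t+1}). -/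
open Finset

noncomputable section

/-!
Write `S = ∑ aₖ xₖ ∈ [-A, A]` and `u, v` for the last two coordinates of `x`. If `u ≠ v`, then
`f x = g x = sgn S`; if `u = v = 1`, then `g x = 1` and `f x = sgn (S - A)`, and for `u = v = -1`
the roles of `f` and `g` are swapped. Hence `(g x - f x) xᵢ` is `2` when `u = v` and `S < A`
(i.e. some of the first `n` coordinates is `-1`), and `0` otherwise. In the semivalue weights,
the points with `u = v = -1` carry `p_{wt y}` and those with `u = v = 1` carry `p_{wt y + 1}`,
where `y` is the restriction of `x` to the first `n` coordinates; grouping the `y ≠ 1` by weight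
gives the binomial sum.
-/

lemma mul_chi_le {a : ℝ} (ha : 0 ≤ a) (b : Bool) : a * chi b ≤ a := by
  unfold chi; split_ifs <;> linarith

lemma neg_le_mul_chi {a : ℝ} (ha : 0 ≤ a) (b : Bool) : -a ≤ a * chi b := by
  unfold chi; split_ifs <;> linarith

lemma dotp_le_sum {n : ℕ} {w : Fin n → ℝ} (hw : ∀ i, 0 ≤ w i) (x : Fin n → Bool) :
    dotp w x ≤ ∑ i, w i :=
  sum_le_sum fun i _ => mul_chi_le (hw i) (x i)

lemma neg_sum_le_dotp {n : ℕ} {w : Fin n → ℝ} (hw : ∀ i, 0 ≤ w i) (x : Fin n → Bool) :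
    -∑ i, w i ≤ dotp w x := by
  rw [← sum_neg_distrib]
  exact sum_le_sum fun i _ => neg_le_mul_chi (hw i) (x i)

lemma dotp_eq_sum_iff {n : ℕ} {w : Fin n → ℝ} (hw : ∀ i, 0 < w i) (x : Fin n → Bool) :
    dotp w x = ∑ i, w i ↔ ∀ i, x i = true := by
  have hgap : ∀ i ∈ univ, 0 ≤ w i - w i * chi (x i) :=
    fun i _ => sub_nonneg.2 (mul_chi_le (hw i).le (x i))
  rw [eq_comm, ← sub_eq_zero, dotp, ← sum_sub_distrib, sum_eq_zero_iff_of_nonneg hgap]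
  refine forall_congr' fun i => ?_
  have := (hw i).ne'
  cases x i <;> simp [chi, this]

lemma sgn_of_nonneg {z : ℝ} (hz : 0 ≤ z) : sgn z = 1 := if_pos hz

lemma sgn_of_neg {z : ℝ} (hz : z < 0) : sgn z = -1 := if_neg (not_le.2 hz)

lemma sgn_shift_sub_sgn_shift_mul_chi {S A : ℝ} (hlo : -A ≤ S) (hhi : S ≤ A)
    (u v c : Bool) (hc : c = u ∨ c = v) :
    (sgn (S + A / 2 * chi u + A / 2 * chi v) - sgn (S - A / 2 * chi u - A / 2 * chi v)) * chi c
      = if u = v then (if S = A then 0 else 2) else 0 := by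
  have hplus : sgn (S + A) = 1 := sgn_of_nonneg (by linarith)
  have hminus : sgn (S - A) = if S = A then 1 else -1 := by
    split_ifs with h
    · exact sgn_of_nonneg (by linarith)
    · exact sgn_of_neg (by contrapose! h; linarith)
  cases u <;> cases v <;> obtain rfl | rfl := hc <;> simp only [chi] <;> norm_num
  all_goals ring_nf at hplus hminus ⊢; rw [hplus, hminus]; split_ifs <;> norm_num

lemma wt_eq_iff {n : ℕ} (y : Fin n → Bool) : wt y = n ↔ ∀ i, y i = true := by
  simpa [wt] using card_filter_eq_iff (s := univ) (p := fun i => y i = true)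

lemma wt_append {m k : ℕ} (y : Fin m → Bool) (z : Fin k → Bool) :
    wt (Fin.append y z) = wt y + wt z := by
  simp only [wt, card_filter, Fin.sum_univ_add, Fin.append_left, Fin.append_right]
  push_cast; ring

lemma sum_comp_wt {n : ℕ} {M : Type*} [AddCommMonoid M] (F : ℤ → M) :
    ∑ y : Fin n → Bool, F (wt y) = ∑ t ∈ range (n + 1), n.choose t • F t := by
  have hbij : Function.Bijective fun y : Fin n → Bool => univ.filter fun i => y i = true := by
    refine ⟨fun y y' h => funext fun i => ?_, fun s => ⟨fun i => decide (i ∈ s), by ext; simp⟩⟩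
    simpa using congrArg (i ∈ ·) h
  rw [Fintype.sum_bijective _ hbij (fun y => F (wt y)) (fun s => F (#s)) fun _ => rfl,
    ← powerset_univ, sum_powerset_apply_card (fun m => F m), card_univ, Fintype.card_fin]

lemma sum_ite_forall_eq_true {n : ℕ} {M : Type*} [AddCommMonoid M] (F : ℤ → M) :
    ∑ y : Fin n → Bool, (if ∀ k, y k = true then 0 else F (wt y))
      = ∑ t ∈ range n, n.choose t • F t := by
  simp only [← wt_eq_iff]
  rw [sum_comp_wt (fun t => if t = n then 0 else F t), sum_range_succ, if_pos rfl, smul_zero,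
    add_zero]
  refine sum_congr rfl fun t ht => ?_
  rw [if_neg (by have := mem_range.1 ht; omega)]

lemma semivalue_sub {n : ℕ} (p : ℤ → ℝ) (f g : (Fin n → Bool) → ℝ) (i : Fin n) :
    semivalue p g i - semivalue p f i = semivalue p (g - f) i := by
  simp only [semivalue, ← sum_sub_distrib, Pi.sub_apply]
  exact sum_congr rfl fun x _ => by ring

lemma sum_weight_mul_diag {n : ℕ} (p : ℤ → ℝ) (c : (Fin n → Bool) → ℝ) (i : Fin (n + 2))
    (hi : n ≤ i) :
    ∑ x : Fin (n + 2) → Bool, (if x i then p (wt x - 1) else p (wt x)) *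
      (if x ⟨n, by omega⟩ = x ⟨n + 1, by omega⟩ then c (fun k => x (Fin.castAdd 2 k)) else 0)
    = ∑ y, c y * (p (wt y) + p (wt y + 1)) := by
  obtain ⟨j, rfl⟩ : ∃ j : Fin 2, Fin.natAdd n j = i :=
    ⟨⟨i - n, by omega⟩, Fin.ext (by simp; omega)⟩
  have h0 : (⟨n, by omega⟩ : Fin (n + 2)) = Fin.natAdd n 0 := rfl
  have h1 : (⟨n + 1, by omega⟩ : Fin (n + 2)) = Fin.natAdd n 1 := rfl
  rw [← (Fin.appendEquiv n 2).sum_comp, Fintype.sum_prod_type]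
  refine sum_congr rfl fun y _ => ?_
  rw [← (piFinTwoEquiv fun _ => Bool).symm.sum_comp, Fintype.sum_prod_type]
  have hwt1 : wt ![true, true] - 1 = 1 := by decide
  have hwt0 : wt ![false, false] = 0 := by decide
  simp only [Fin.appendEquiv, Equiv.coe_fn_mk, wt_append, add_sub_assoc]
  fin_cases j <;> simp [h0, h1, hwt0, hwt1] <;> ring

theorem stmt12 (n : ℕ) (a : Fin n → ℝ) (ha : ∀ i, 0 < a i)
    (A : ℝ) (hA : A = ∑ i, a i)
    (p : ℤ → ℝ)
    (f g : (Fin (n + 2) → Bool) → ℝ)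
    (hf : ∀ x : Fin (n + 2) → Bool,
      f x = sgn ((∑ i : Fin n, a i * chi (x (Fin.castAdd 2 i)))
        - A / 2 * chi (x ⟨n, by omega⟩) - A / 2 * chi (x ⟨n + 1, by omega⟩)))
    (hg : ∀ x : Fin (n + 2) → Bool,
      g x = sgn ((∑ i : Fin n, a i * chi (x (Fin.castAdd 2 i)))
        + A / 2 * chi (x ⟨n, by omega⟩) + A / 2 * chi (x ⟨n + 1, by omega⟩))) :
    ∀ i : Fin (n + 2), n ≤ (i : ℕ) →
      semivalue p g i = semivalue p f i
        + 2 * ∑ t ∈ Finset.range n, (n.choose t : ℝ) * (p (t : ℤ) + p ((t : ℤ) + 1)) := by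
  intro i hi
  have hpos : ∀ k, 0 ≤ a k := fun k => (ha k).le
  have hdiff : ∀ x : Fin (n + 2) → Bool, (g x - f x) * chi (x i) =
      if x ⟨n, by omega⟩ = x ⟨n + 1, by omega⟩ then
        (if ∀ k, x (Fin.castAdd 2 k) = true then 0 else 2) else 0 := by
    intro x
    have hi' : x i = x ⟨n, by omega⟩ ∨ x i = x ⟨n + 1, by omega⟩ := by
      rcases Nat.eq_or_lt_of_le hi with h | h
      · exact .inl (congrArg x (Fin.ext h.symm))
      · exact .inr (congrArg x (Fin.ext (by have := i.isLt; simp; omega)))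
    rw [hf, hg, sgn_shift_sub_sgn_shift_mul_chi (hA ▸ neg_sum_le_dotp hpos _)
      (hA ▸ dotp_le_sum hpos _) _ _ _ hi', hA]
    have hall := dotp_eq_sum_iff ha fun k => x (Fin.castAdd 2 k)
    simp only [dotp] at hall
    simp only [hall]
  rw [← sub_eq_iff_eq_add', semivalue_sub]
  simp only [semivalue, Pi.sub_apply, mul_assoc, hdiff]
  rw [sum_weight_mul_diag p (fun y => if ∀ k, y k = true then 0 else 2) i hi]
  simp only [ite_mul, zero_mul]
  rw [sum_ite_forall_eq_true (fun t => 2 * (p t + p (t + 1))), mul_sum]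
  simp only [nsmul_eq_mul]
  exact sum_congr rfl fun t _ => by ring
end
end
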